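/- The set of transformations F ∈ R^∞ satisfying the pre-Zeiger property is a self-similar subsemigroup of R^∞. Moreover, if F ∈ R^∞ has the pre-Zeiger property and q⃗ = (q_n,…,q_1) is an 𝓛-chain of length ≥ 2 with q⃗F = (s_n,…,s_1), q_{n-1} = s_{n-1} and q_n 𝓡 s_n, then q_n = s_n (the Zeiger property). -/

import Mathlib

open Pointwise

/-- Green's preorder `x ≤_𝓛 y`, i.e. `x ∈ S¹y`. -/
def leL {S : Type} [Semigroup S] (x y : S) : Prop := x = y ∨ ∃ a, x = a * y
/-- Green's preorder `x ≤_𝓡 y`, i.e. `x ∈ yS¹`. -/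
def leR {S : Type} [Semigroup S] (x y : S) : Prop := x = y ∨ ∃ a, x = y * a
/-- Green's relation `𝓛`. -/
def eqL {S : Type} [Semigroup S] (x y : S) : Prop := leL x y ∧ leL y x
/-- Green's relation `𝓡`. -/
def eqR {S : Type} [Semigroup S] (x y : S) : Prop := leR x y ∧ leR y x
/-- Green's preorder `≤_𝓗`. -/
def leH {S : Type} [Semigroup S] (x y : S) : Prop := leL x y ∧ leR x y
/-- Green's relation `𝓗`. -/
def eqH {S : Type} [Semigroup S] (x y : S) : Prop := eqL x y ∧ eqR x y
/-- The 𝓗-class of `x`. -/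
def HClass {S : Type} [Semigroup S] (x : S) : Set S := {y | eqH y x}
/-- The 𝓛-class of `x`. -/
def LClass {S : Type} [Semigroup S] (x : S) : Set S := {y | eqL y x}

/-- Right multiplication by an element of `S¹ = WithOne S`, as a map `S → S`. -/
noncomputable def actW {S : Type} [Semigroup S] (q : S) (m : WithOne S) : S :=
  @dite _ (m = 1) (Classical.dec _) (fun _ => q) (fun h => q * WithOne.unone h)

/-- The monoid `R` of functions on `W`: (i) `qr ≤_𝓡 q`; (ii) `r` preserves `𝓛`;
(iii) there is `q_r ∈ W¹` with `qr = q·q_r` whenever `qr 𝓡 q`. -/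
def RMon (W : Type) [Semigroup W] : Set (W → W) :=
  {r | (∀ q, leR (r q) q) ∧ (∀ q q', eqL q q' → eqL (r q) (r q')) ∧
       ∃ qr : WithOne W, ∀ q, eqR (r q) q → r q = actW q qr}

/-- Apply an `R`-definition `d` to a word (words are read right to left, so the head of
the list is the last letter and `d` is applied to the strict suffix). -/
def applyRDef {X R : Type} (act : X → R → X) (d : List X → R) : List X → List X
  | [] => []
  | x :: q => act x (d q) :: applyRDef act d q

/-- Membership in the infinite wreath product `R^∞` for the transformation monoid
`RMon W` acting on `W` by function application. -/
def RInf {W : Type} [Semigroup W] (F : List W → List W) : Prop :=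
  ∃ d : List W → (W → W), (∀ l, d l ∈ RMon W) ∧ ∀ l, F l = applyRDef (fun x r => r x) d l

/-- The pre-Zeiger property for a transformation of words over `W`. -/
def PreZeiger {W : Type} [Semigroup W] (F : List W → List W) : Prop :=
  ∀ (qn qn1 : W) (rest : List W) (sn sn1 : W) (rest' : List W),
    F (qn :: qn1 :: rest) = sn :: sn1 :: rest' → eqR qn1 sn1 → eqR qn sn →
    ∃ t : WithOne W, actW qn1 t = sn1 ∧ actW qn t = sn

/-- An 𝓛-chain `(qₙ, …, q₁)`, encoded as the list `[qₙ, …, q₁]`. -/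
def IsLChain {W : Type} [Semigroup W] (l : List W) : Prop :=
  List.Chain' (fun a b : W => leL a b) l


/-!
Along a word, the transformation `G ∘ F` sends a letter `q` first to its `F`-image `p` and then
to `s`, with `s ≤_𝓡 p ≤_𝓡 q`; so `q 𝓡 s` forces `q 𝓡 p 𝓡 s` at each of the two top letters, and
the pre-Zeiger witnesses `t` of `F` and `u` of `G` combine into the witness `t u` of `G ∘ F`.
Self-similarity holds because the letters of `F (β ++ γ)` above `γ` only read `β` and the fixed
suffix `γ`. For the Zeiger property, the pre-Zeiger witness `t` fixes `qₙ₋₁`, and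
`qₙ ∈ S¹ qₙ₋₁` then gives `qₙ t = qₙ`.
-/

section Green

variable {S : Type} [Semigroup S]

theorem leR_refl (x : S) : leR x x := Or.inl rfl

theorem leR.trans {x y z : S} (hxy : leR x y) (hyz : leR y z) : leR x z := by
  rcases hxy with rfl | ⟨a, rfl⟩ <;> rcases hyz with rfl | ⟨b, rfl⟩
  · exact leR_refl _
  · exact Or.inr ⟨b, rfl⟩
  · exact Or.inr ⟨a, rfl⟩
  · exact Or.inr ⟨b * a, mul_assoc z b a⟩

theorem eqR_refl (x : S) : eqR x x := ⟨leR_refl x, leR_refl x⟩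

theorem eqR.symm {x y : S} (h : eqR x y) : eqR y x := ⟨h.2, h.1⟩

theorem eqR_of_leR_of_leR {q p s : S} (hpq : leR p q) (hsp : leR s p) (hqs : eqR q s) :
    eqR q p ∧ eqR p s :=
  ⟨⟨hqs.1.trans hsp, hpq⟩, ⟨hpq.trans hqs.1, hsp⟩⟩

end Green

section RightAction

variable {S : Type} [Semigroup S]

@[simp]
theorem actW_one (q : S) : actW q 1 = q := dif_pos rfl

@[simp]
theorem actW_coe (q u : S) : actW q u = q * u := by
  rw [actW, dif_neg WithOne.coe_ne_one]
  rfl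

theorem actW_actW (q : S) (a b : WithOne S) : actW (actW q a) b = actW q (a * b) := by
  induction a using WithOne.cases_on <;> induction b using WithOne.cases_on <;>
    simp [← WithOne.coe_mul, mul_assoc]

theorem actW_mul_left (b y : S) (t : WithOne S) : actW (b * y) t = b * actW y t := by
  induction t using WithOne.cases_on <;> simp [mul_assoc]

theorem actW_eq_self_of_leL {x y : S} {t : WithOne S} (hxy : leL x y) (hy : actW y t = y) :
    actW x t = x := by
  rcases hxy with rfl | ⟨b, rfl⟩
  · exact hy
  · rw [actW_mul_left, hy]

end RightAction

theorem comp_mem_RMon {S : Type} [Semigroup S] {r₁ r₂ : S → S} (h₁ : r₁ ∈ RMon S)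
    (h₂ : r₂ ∈ RMon S) : r₂ ∘ r₁ ∈ RMon S := by
  obtain ⟨h₁R, h₁L, u₁, h₁u⟩ := h₁
  obtain ⟨h₂R, h₂L, u₂, h₂u⟩ := h₂
  refine ⟨fun q => (h₂R (r₁ q)).trans (h₁R q), fun q q' h => h₂L _ _ (h₁L _ _ h), u₁ * u₂,
    fun q hq => ?_⟩
  obtain ⟨hq₁, hq₂⟩ := eqR_of_leR_of_leR (h₁R q) (h₂R (r₁ q)) hq.symm
  rw [Function.comp_apply, h₂u _ hq₂.symm, h₁u _ hq₁.symm, actW_actW]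

section Words

variable {X R : Type} (act : X → R → X)

@[simp]
theorem applyRDef_cons (d : List X → R) (x : X) (l : List X) :
    applyRDef act d (x :: l) = act x (d l) :: applyRDef act d l := rfl

theorem applyRDef_append (d : List X → R) (β γ : List X) :
    applyRDef act d (β ++ γ) = applyRDef act (fun l => d (l ++ γ)) β ++ applyRDef act d γ := by
  induction β with
  | nil => rfl
  | cons x β ih => simp [ih]

theorem applyRDef_apply_applyRDef (d d' : List X → X → X) (l : List X) :
    applyRDef (fun x r => r x) d' (applyRDef (fun x r => r x) d l) =
      applyRDef (fun x r => r x) (fun l => d' (applyRDef (fun x r => r x) d l) ∘ d l) l := by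
  induction l with
  | nil => rfl
  | cons x l ih => simp [ih]

end Words

namespace RInf

variable {S : Type} [Semigroup S] {F G : List S → List S}

theorem exists_apply_cons (hF : RInf F) (x : S) (l : List S) :
    ∃ y, F (x :: l) = y :: F l ∧ leR y x := by
  obtain ⟨d, hd, hFd⟩ := hF
  exact ⟨d l x, by rw [hFd, hFd]; rfl, (hd l).1 x⟩

theorem comp (hF : RInf F) (hG : RInf G) : RInf (fun l => G (F l)) := by
  obtain ⟨d, hd, hFd⟩ := hF
  obtain ⟨d', hd', hGd'⟩ := hG
  refine ⟨fun l => d' (F l) ∘ d l, fun l => comp_mem_RMon (hd l) (hd' (F l)), fun l => ?_⟩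
  simp only [hGd', hFd, applyRDef_apply_applyRDef]

theorem exists_apply_append (hF : RInf F) (γ : List S) :
    ∃ Fγ : List S → List S, (∀ β, F (β ++ γ) = Fγ β ++ F γ) ∧ RInf Fγ := by
  obtain ⟨d, hd, hFd⟩ := hF
  refine ⟨applyRDef (fun x r => r x) (fun l => d (l ++ γ)), fun β => ?_,
    ⟨_, fun l => hd (l ++ γ), fun l => rfl⟩⟩
  rw [hFd, hFd, applyRDef_append]

end RInf

namespace PreZeiger

variable {S : Type} [Semigroup S] {F G : List S → List S}

theorem comp (hF : RInf F) (hFZ : PreZeiger F) (hG : RInf G) (hGZ : PreZeiger G) :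
    PreZeiger (fun l => G (F l)) := by
  intro qn qn1 rest sn sn1 rest' hGF hR₁ hR
  obtain ⟨pn1, hF₁, hpq₁⟩ := hF.exists_apply_cons qn1 rest
  obtain ⟨pn, hF₂, hpq⟩ := hF.exists_apply_cons qn (qn1 :: rest)
  obtain ⟨sn1', hG₁, hsp₁⟩ := hG.exists_apply_cons pn1 (F rest)
  obtain ⟨sn', hG₂, hsp⟩ := hG.exists_apply_cons pn (pn1 :: F rest)
  have hFq : F (qn :: qn1 :: rest) = pn :: pn1 :: F rest := by rw [hF₂, hF₁]
  have hGp : G (pn :: pn1 :: F rest) = sn' :: sn1' :: G (F rest) := by rw [hG₂, hG₁]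
  obtain ⟨rfl, rfl, -⟩ : sn' = sn ∧ sn1' = sn1 ∧ G (F rest) = rest' := by
    simpa [hFq, hGp] using hGF
  obtain ⟨hqp₁, hps₁⟩ := eqR_of_leR_of_leR hpq₁ hsp₁ hR₁
  obtain ⟨hqp, hps⟩ := eqR_of_leR_of_leR hpq hsp hR
  obtain ⟨t, ht₁, ht⟩ := hFZ qn qn1 rest pn pn1 (F rest) hFq hqp₁ hqp
  obtain ⟨u, hu₁, hu⟩ := hGZ pn pn1 (F rest) _ _ _ hGp hps₁ hps
  exact ⟨t * u, by rw [← actW_actW, ht₁, hu₁], by rw [← actW_actW, ht, hu]⟩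

theorem of_apply_append {Fγ : List S → List S} {γ : List S} (hF : PreZeiger F)
    (hFγ : ∀ β, F (β ++ γ) = Fγ β ++ F γ) : PreZeiger Fγ := by
  intro qn qn1 rest sn sn1 rest' h
  apply hF qn qn1 (rest ++ γ) sn sn1 (rest' ++ F γ)
  rw [← List.cons_append, ← List.cons_append, hFγ, h]
  rfl

theorem eq_of_isLChain (hF : PreZeiger F) {qn qn1 sn : S} {rest rest' : List S}
    (hchain : IsLChain (qn :: qn1 :: rest)) (h : F (qn :: qn1 :: rest) = sn :: qn1 :: rest')
    (hR : eqR qn sn) : qn = sn := by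
  obtain ⟨t, ht₁, ht⟩ := hF qn qn1 rest sn qn1 rest' h (eqR_refl qn1) hR
  rw [← ht, actW_eq_self_of_leL (List.isChain_cons_cons.mp hchain).1 ht₁]

end PreZeiger

theorem zeiger_general (W : Type) [Semigroup W] :
    (∀ F G : List W → List W, RInf F → PreZeiger F → RInf G → PreZeiger G →
      RInf (fun l => G (F l)) ∧ PreZeiger (fun l => G (F l))) ∧
    (∀ F : List W → List W, RInf F → PreZeiger F → ∀ a : W,
      ∃ Fa : List W → List W, (∀ β, F (β ++ [a]) = Fa β ++ F [a]) ∧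
        RInf Fa ∧ PreZeiger Fa) ∧
    (∀ F : List W → List W, RInf F → PreZeiger F →
      ∀ (qn qn1 : W) (rest : List W) (sn sn1 : W) (rest' : List W),
        IsLChain (qn :: qn1 :: rest) →
        F (qn :: qn1 :: rest) = sn :: sn1 :: rest' →
        qn1 = sn1 → eqR qn sn → qn = sn) := by
  refine ⟨fun F G hF hFZ hG hGZ => ⟨hF.comp hG, hFZ.comp hF hG hGZ⟩, ?_, ?_⟩
  · intro F hF hFZ a
    obtain ⟨Fa, hFa, hFaR⟩ := hF.exists_apply_append [a]
    exact ⟨Fa, hFa, hFaR, hFZ.of_apply_append hFa⟩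
  · rintro F - hFZ qn qn1 rest sn sn1 rest' hchain h rfl hR
    exact hFZ.eq_of_isLChain hchain h hR

/-- The pre-Zeiger transformations form a self-similar subsemigroup of `R^∞`, and on
𝓛-chains they enjoy the Zeiger property. -/
theorem zeiger (W : Type) [Semigroup W] [Finite W] :
    (∀ F G : List W → List W, RInf F → PreZeiger F → RInf G → PreZeiger G →
      RInf (fun l => G (F l)) ∧ PreZeiger (fun l => G (F l))) ∧
    (∀ F : List W → List W, RInf F → PreZeiger F → ∀ a : W,
      ∃ Fa : List W → List W, (∀ β, F (β ++ [a]) = Fa β ++ F [a]) ∧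
        RInf Fa ∧ PreZeiger Fa) ∧
    (∀ F : List W → List W, RInf F → PreZeiger F →
      ∀ (qn qn1 : W) (rest : List W) (sn sn1 : W) (rest' : List W),
        IsLChain (qn :: qn1 :: rest) →
        F (qn :: qn1 :: rest) = sn :: sn1 :: rest' →
        qn1 = sn1 → eqR qn sn → qn = sn) :=
  zeiger_general W
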